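/- Let p1=(0,0), p2=(∞,∞), p3=(x,y), p4=(1,1) be an admissible quadruple of points in the torus T = (R∪{∞})², with x,y ∉ {0,1}. Then the cross-ratios X1 := xy and X2 := (1-x)(1-y) satisfy the fundamental inequality Δ(X1,X2) = X1² + X2² - 2X1 - 2X2 + 1 - 2X1X2 ≥ 0, with equality if and only if x = y. -/
import Mathlib


/-- For the normalized admissible quadruple `((0,0),(∞,∞),(x,y),(1,1))` in the torus,
with cross-ratios `X1 = xy`, `X2 = (1-x)(1-y)`, the fundamental inequality
`Δ(X1,X2) ≥ 0` holds, with equality iff `x = y` (i.e. the four points lie on a Circle). -/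
theorem fundamental_inequality_normalized (x y : ℝ)
    (hx0 : x ≠ 0) (hx1 : x ≠ 1) (hy0 : y ≠ 0) (hy1 : y ≠ 1) :
    let X1 := x * y
    let X2 := (1 - x) * (1 - y)
    X1 ^ 2 + X2 ^ 2 - 2 * X1 - 2 * X2 + 1 - 2 * X1 * X2 ≥ 0 ∧
    (X1 ^ 2 + X2 ^ 2 - 2 * X1 - 2 * X2 + 1 - 2 * X1 * X2 = 0 ↔ x = y) := by
  intro X1 X2
  have h : X1 ^ 2 + X2 ^ 2 - 2 * X1 - 2 * X2 + 1 - 2 * X1 * X2 = (x - y) ^ 2 := by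
    simp only [X1, X2]; ring
  rw [h]
  refine ⟨sq_nonneg _, ?_⟩
  constructor
  · intro h0
    have := pow_eq_zero_iff (n := 2) (by norm_num) |>.mp h0
    linarith [sub_eq_zero.mp this]
  · intro h0; rw [h0]; ring
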